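/- After an incremental update on the set E_i(v) of edges incoming to v, for every source s ∈ V the following hold: (i) if d'(s,v) = d(s,v), then the number σ̂'_{sv} of shortest paths from s to v in G' that use an edge of E_i(v) equals Σ_{j : d(s,u_j) + w'(u_j,v) = d(s,v)} σ_{su_j}, and σ'_{sv} = σ_{sv} + σ̂'_{sv}; (ii) if d'(s,v) < d(s,v), then σ'_{sv} = Σ_{j : d(s,u_j) + w'(u_j,v) = d'(s,v)} σ_{su_j}. -/

import Mathlib

/-!
Positive weights make shortest paths simple, so an edge into `v` can only be the last edge of a
shortest path to `v`. Only edges into `v` change, so a path avoiding the updated edges has the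
same weight before and after the update, and a shortest path of `G'` through an updated edge
`(u, v)` is exactly a shortest path of `G` to `u` followed by `(u, v)`, possible precisely when
`d(s,u) + w'(u,v) = d'(s,v)`. If `d' = d`, the shortest paths of `G` are those of `G'` avoiding
the updated edges (using one would make `G'` strictly shorter); if `d' < d`, every shortest path
of `G'` uses one.
-/

open scoped ENNReal

namespace BC

variable {V : Type*}

/-- `p` is a path from `s` to `t` in the weighted digraph with weight function `w`;
an edge is present iff its weight is not `⊤`. -/
def IsPath (w : V → V → ℝ≥0∞) (s t : V) (p : List V) : Prop :=
  p ≠ [] ∧ p.head? = some s ∧ p.getLast? = some t ∧ p.Chain' (fun a b => w a b ≠ ⊤)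

/-- The weight of a path: the sum of the weights of its consecutive edges. -/
noncomputable def pWeight (w : V → V → ℝ≥0∞) (p : List V) : ℝ≥0∞ :=
  ((p.zip p.tail).map fun e => w e.1 e.2).sum

/-- The shortest-path distance `d(s,t)` (equal to `⊤` if no path exists). -/
noncomputable def dist (w : V → V → ℝ≥0∞) (s t : V) : ℝ≥0∞ :=
  ⨅ p ∈ {p | IsPath w s t p}, pWeight w p

/-- `p` is a shortest path from `s` to `t`. -/
def IsShortest (w : V → V → ℝ≥0∞) (s t : V) (p : List V) : Prop :=
  IsPath w s t p ∧ pWeight w p = dist w s t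

/-- `σ_{st}`: the number of shortest paths from `s` to `t`. -/
noncomputable def nsp (w : V → V → ℝ≥0∞) (s t : V) : ℕ :=
  Set.ncard {p | IsShortest w s t p}

/-- `σ_{st}(x)`: the number of shortest paths from `s` to `t` passing through `x`. -/
noncomputable def nspVia (w : V → V → ℝ≥0∞) (s t x : V) : ℕ :=
  Set.ncard {p | IsShortest w s t p ∧ x ∈ p}

/-- The directed edge `(a,b)` lies on the path `p`. -/
def edgeOn (p : List V) (a b : V) : Prop := (a, b) ∈ p.zip p.tail

/-- The shortest-path DAG rooted at `s`: the edges lying on shortest paths from `s`. -/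
def dagSet (w : V → V → ℝ≥0∞) (s : V) : Set (V × V) :=
  {e | w e.1 e.2 ≠ ⊤ ∧ dist w s e.1 ≠ ⊤ ∧ dist w s e.1 + w e.1 e.2 = dist w s e.2}

variable {w w' : V → V → ℝ≥0∞} {s t u v x a b : V} {p q : List V}

lemma edgeOn_iff : edgeOn p a b ↔ ∃ l₁ l₂, p = l₁ ++ a :: b :: l₂ := by
  induction p using List.twoStepInduction with
  | nil => simp [edgeOn]
  | singleton y => simp [edgeOn, List.cons_eq_append_iff]
  | cons_cons y z l _ ih =>
    change (a, b) ∈ List.zip (y :: z :: l) (z :: l) ↔ _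
    rw [List.zip_cons_cons, List.mem_cons, Prod.mk.injEq]
    change _ ∨ edgeOn (z :: l) a b ↔ _
    rw [ih z]
    constructor
    · rintro (⟨rfl, rfl⟩ | ⟨l₁, l₂, h⟩)
      · exact ⟨[], l, rfl⟩
      · exact ⟨y :: l₁, l₂, by rw [h, List.cons_append]⟩
    · rintro ⟨_ | ⟨y', l₁⟩, l₂, h⟩
      · simp_all
      · simp only [List.cons_append, List.cons.injEq] at h
        exact Or.inr ⟨l₁, l₂, h.2⟩

lemma isChain_iff_forall_edgeOn {R : V → V → Prop} :
    p.IsChain R ↔ ∀ a b, edgeOn p a b → R a b := by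
  simp only [List.isChain_iff_forall_rel_of_append_cons_cons, edgeOn_iff]
  exact ⟨fun h a b ⟨_, _, hp⟩ => h hp, fun h a b l₁ l₂ hp => h a b ⟨l₁, l₂, hp⟩⟩

lemma edgeOn_concat (h : q.getLast? = some u) (v : V) : edgeOn (q ++ [v]) u v := by
  obtain ⟨l, rfl⟩ := List.getLast?_eq_some_iff.1 h
  exact edgeOn_iff.2 ⟨l, [], by simp⟩

@[simp] lemma pWeight_cons_cons (l : List V) :
    pWeight w (a :: b :: l) = w a b + pWeight w (b :: l) := by
  simp [pWeight]

@[simp] lemma pWeight_singleton (a : V) : pWeight w [a] = 0 := by simp [pWeight]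

lemma pWeight_append_cons (l₁ : List V) (x : V) (l₂ : List V) :
    pWeight w (l₁ ++ x :: l₂) = pWeight w (l₁ ++ [x]) + pWeight w (x :: l₂) := by
  induction l₁ using List.twoStepInduction with
  | nil => simp
  | singleton a => simp
  | cons_cons a b l _ ih =>
    simp only [List.cons_append] at ih ⊢
    rw [pWeight_cons_cons, ih b, pWeight_cons_cons, add_assoc]

lemma pWeight_concat (h : q.getLast? = some u) (v : V) :
    pWeight w (q ++ [v]) = pWeight w q + w u v := by
  obtain ⟨l, rfl⟩ := List.getLast?_eq_some_iff.1 h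
  simp [pWeight_append_cons l u [v]]

lemma pWeight_congr (h : ∀ a b, edgeOn p a b → w a b = w' a b) : pWeight w p = pWeight w' p :=
  congrArg List.sum (List.map_congr_left fun e he => h e.1 e.2 he)

lemma pWeight_mono (h : ∀ a b, w a b ≤ w' a b) (p : List V) : pWeight w p ≤ pWeight w' p :=
  List.sum_le_sum fun e _ => h e.1 e.2

lemma pWeight_ne_top (h : p.IsChain fun a b => w a b ≠ ⊤) : pWeight w p ≠ ⊤ := by
  induction p using List.twoStepInduction with
  | nil => simp [pWeight]
  | singleton => simp
  | cons_cons a b l _ ih =>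
    rw [List.isChain_cons_cons] at h
    rw [pWeight_cons_cons]
    exact ENNReal.add_ne_top.2 ⟨h.1, ih b h.2⟩

lemma pWeight_cycle_pos (hpos : ∀ a b, 0 < w a b) (a : V) (l : List V) :
    0 < pWeight w (a :: l ++ [a]) := by
  cases l with
  | nil => simpa using hpos a a
  | cons b l => exact (hpos a b).trans_le (by simp)

lemma isPath_append_cons_iff {l₁ l₂ : List V} :
    IsPath w s t (l₁ ++ x :: l₂) ↔
      IsPath w s x (l₁ ++ [x]) ∧ IsPath w x t (x :: l₂) := by
  have hhead : (l₁ ++ x :: l₂).head? = (l₁ ++ [x]).head? := by cases l₁ <;> simp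
  have hlast : (l₁ ++ x :: l₂).getLast? = (x :: l₂).getLast? := by
    rw [List.getLast?_append, List.getLast?_cons]; rfl
  simp only [IsPath, List.Chain']
  rw [List.isChain_split, hhead, hlast, List.getLast?_concat, List.head?_cons]
  simp only [ne_eq, List.append_eq_nil_iff, reduceCtorEq, and_false, not_false_eq_true,
    true_and]
  tauto

lemma isPath_pair : IsPath w a b [a, b] ↔ w a b ≠ ⊤ := by
  simp [IsPath, List.Chain']

lemma IsPath.concat (hq : IsPath w s u q) (hu : w u v ≠ ⊤) : IsPath w s v (q ++ [v]) := by
  obtain ⟨l, rfl⟩ := List.getLast?_eq_some_iff.1 hq.2.2.1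
  rw [List.append_assoc, List.singleton_append, isPath_append_cons_iff]
  exact ⟨hq, isPath_pair.2 hu⟩

lemma isPath_congr (h : ∀ a b, edgeOn p a b → w a b = w' a b) :
    IsPath w s t p ↔ IsPath w' s t p := by
  simp only [IsPath, List.Chain', isChain_iff_forall_edgeOn]
  exact and_congr_right fun _ => and_congr_right fun _ => and_congr_right fun _ =>
    forall₂_congr fun a b => imp_congr_right fun hab => by rw [h a b hab]

lemma IsPath.mono (h : ∀ a b, w' a b ≤ w a b) (hp : IsPath w s t p) : IsPath w' s t p :=
  ⟨hp.1, hp.2.1, hp.2.2.1, hp.2.2.2.imp fun a b hab => ne_top_of_le_ne_top hab (h a b)⟩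

lemma dist_le (hp : IsPath w s t p) : dist w s t ≤ pWeight w p :=
  iInf₂_le p hp

lemma dist_mono (h : ∀ a b, w' a b ≤ w a b) (s t : V) : dist w' s t ≤ dist w s t :=
  le_iInf₂ fun _ hp => (dist_le (hp.mono h)).trans (pWeight_mono h _)

lemma dist_le_dist_add (w : V → V → ℝ≥0∞) (s u v : V) :
    dist w s v ≤ dist w s u + w u v := by
  rcases eq_or_ne (w u v) ⊤ with hu | hu
  · simp [hu]
  rw [← tsub_le_iff_right]
  exact le_iInf₂ fun q hq => tsub_le_iff_right.2 <|
    (dist_le (hq.concat hu)).trans_eq (pWeight_concat hq.2.2.1 v)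

lemma dist_le_of_mem (hp : IsPath w s t p) (hx : x ∈ p) : dist w s x ≤ pWeight w p := by
  obtain ⟨l₁, l₂, rfl⟩ := List.append_of_mem hx
  rw [pWeight_append_cons]
  exact (dist_le (isPath_append_cons_iff.1 hp).1).trans le_self_add

lemma IsShortest.nodup (hpos : ∀ a b, 0 < w a b) (hp : IsShortest w s t p) : p.Nodup := by
  rw [List.nodup_iff_sublist]
  intro a hsub
  obtain ⟨r₁, r₂, rfl, h₁, h₂⟩ := List.cons_sublist_iff.1 hsub
  obtain ⟨l₁, l₂, rfl⟩ := List.append_of_mem h₁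
  obtain ⟨l₃, l₄, rfl⟩ := List.append_of_mem (List.singleton_sublist.1 h₂)
  rw [show l₁ ++ a :: l₂ ++ (l₃ ++ a :: l₄) = l₁ ++ a :: (l₂ ++ l₃ ++ a :: l₄) by
    simp] at hp
  obtain ⟨hpre, hrest⟩ := isPath_append_cons_iff.1 hp.1
  rw [← List.cons_append, isPath_append_cons_iff] at hrest
  have hshort : IsPath w s t (l₁ ++ a :: l₄) := isPath_append_cons_iff.2 ⟨hpre, hrest.2⟩
  have hweight : pWeight w (l₁ ++ a :: (l₂ ++ l₃ ++ a :: l₄))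
      = pWeight w (l₁ ++ a :: l₄) + pWeight w (a :: (l₂ ++ l₃) ++ [a]) := by
    rw [pWeight_append_cons l₁ a (_ ++ _), pWeight_append_cons l₁ a l₄, ← List.cons_append,
      pWeight_append_cons (a :: _) a l₄]
    ring
  have hlt := (dist_le hshort).trans_lt <|
    ENNReal.lt_add_right (pWeight_ne_top hshort.2.2.2) (pWeight_cycle_pos hpos a (l₂ ++ l₃)).ne'
  rw [← hweight, hp.2] at hlt
  exact lt_irrefl _ hlt

lemma finite_setOf_isShortest [Fintype V] (hpos : ∀ a b, 0 < w a b) (s t : V) :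
    {p | IsShortest w s t p}.Finite :=
  (List.finite_length_le V (Fintype.card V)).subset fun _ hp => (hp.nodup hpos).length_le_card

lemma IsPath.exists_eq_concat_of_edgeOn (hp : IsPath w s v p) (hnd : p.Nodup)
    (he : edgeOn p u v) : ∃ q, p = q ++ [v] ∧ v ∉ q ∧ IsPath w s u q := by
  obtain ⟨l₁, l₂, rfl⟩ := edgeOn_iff.1 he
  have hv : v ∉ l₁ ++ [u] ∧ v ∉ l₂ := by
    simp only [List.nodup_append, List.nodup_cons, List.mem_cons] at hnd
    simp only [List.mem_append, List.mem_singleton, not_or]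
    exact ⟨⟨fun hv => hnd.2.2 v hv v (Or.inr (Or.inl rfl)) rfl,
      fun h => hnd.2.1.1 (Or.inl h.symm)⟩, hnd.2.1.2.1⟩
  obtain rfl : l₂ = [] := by
    obtain hl | ⟨l, x, rfl⟩ := l₂.eq_nil_or_concat
    · exact hl
    have hlast := hp.2.2.1
    rw [List.concat_eq_append,
      show l₁ ++ u :: v :: (l ++ [x]) = l₁ ++ u :: v :: l ++ [x] by simp,
      List.getLast?_concat, Option.some_inj] at hlast
    subst hlast
    simp at hv
  exact ⟨l₁ ++ [u], by simp, hv.1, (isPath_append_cons_iff.1 hp).1⟩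

/-- An incremental update on `E_i(v) = {(u, v) : u ∈ U}`; inserting a new edge is decreasing its
weight from `⊤`. -/
structure IsIncrementalUpdate (w w' : V → V → ℝ≥0∞) (v : V) (U : Finset V) : Prop where
  lt : ∀ u ∈ U, w' u v < w u v
  eq : ∀ a b, ¬(b = v ∧ a ∈ U) → w' a b = w a b

namespace IsIncrementalUpdate

variable {U : Finset V}

lemma le (H : IsIncrementalUpdate w w' v U) (a b : V) : w' a b ≤ w a b := by
  by_cases h : b = v ∧ a ∈ U
  · obtain ⟨rfl, ha⟩ := h
    exact (H.lt a ha).le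
  · exact (H.eq a b h).le

lemma eq_of_edgeOn_of_notMem (H : IsIncrementalUpdate w w' v U) (hv : v ∉ p) :
    ∀ a b, edgeOn p a b → w' a b = w a b := by
  intro a b hab
  refine H.eq a b fun ⟨hb, _⟩ => hv ?_
  obtain ⟨l₁, l₂, rfl⟩ := edgeOn_iff.1 hab
  simp [← hb]

lemma eq_of_edgeOn_of_not_exists (H : IsIncrementalUpdate w w' v U)
    (h : ¬∃ u ∈ U, edgeOn p u v) : ∀ a b, edgeOn p a b → w' a b = w a b :=
  fun a b hab => H.eq a b fun ⟨hb, ha⟩ => h ⟨a, ha, hb ▸ hab⟩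

lemma exists_isShortest_of_edgeOn (H : IsIncrementalUpdate w w' v U)
    (hpos' : ∀ a b, 0 < w' a b) (hp : IsShortest w' s v p) (hu : u ∈ U) (he : edgeOn p u v) :
    ∃ q, p = q ++ [v] ∧ IsShortest w s u q ∧ dist w s u + w' u v = dist w' s v := by
  obtain ⟨q, rfl, hvq, hq⟩ := hp.1.exists_eq_concat_of_edgeOn (hp.nodup hpos') he
  have hqw := H.eq_of_edgeOn_of_notMem hvq
  have hq' : IsPath w s u q := (isPath_congr hqw).1 hq
  have hweight : pWeight w q + w' u v = dist w' s v := by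
    rw [← pWeight_congr hqw, ← pWeight_concat hq.2.2.1, hp.2]
  have hle : dist w' s v ≤ dist w s u + w' u v :=
    (dist_le_dist_add w' s u v).trans (add_le_add_left (dist_mono H.le s u) _)
  have hq_short : pWeight w q = dist w s u :=
    le_antisymm ((ENNReal.add_le_add_iff_right (H.lt u hu).ne_top).1 (hweight.trans_le hle))
      (dist_le hq')
  exact ⟨q, rfl, ⟨hq', hq_short⟩, hq_short ▸ hweight⟩

lemma isShortest_concat (H : IsIncrementalUpdate w w' v U) (hpos' : ∀ a b, 0 < w' a b)
    (hq : IsShortest w s u q) (hu : u ∈ U) (hd : dist w s u + w' u v = dist w' s v) :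
    IsShortest w' s v (q ++ [v]) := by
  have hvq : v ∉ q := by
    intro hv
    have hfin : dist w s u ≠ ⊤ := hq.2 ▸ pWeight_ne_top hq.1.2.2.2
    have := calc dist w s u < dist w s u + w' u v := ENNReal.lt_add_right hfin (hpos' u v).ne'
      _ = dist w' s v := hd
      _ ≤ dist w s v := dist_mono H.le s v
      _ ≤ dist w s u := hq.2 ▸ dist_le_of_mem hq.1 hv
    exact this.false
  have hqw := H.eq_of_edgeOn_of_notMem hvq
  refine ⟨((isPath_congr hqw).2 hq.1).concat (H.lt u hu).ne_top, ?_⟩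
  rw [pWeight_concat hq.1.2.2.1, pWeight_congr hqw, hq.2, hd]

open Classical in
lemma setOf_isShortest_edgeOn_eq (H : IsIncrementalUpdate w w' v U)
    (hpos' : ∀ a b, 0 < w' a b) (s : V) :
    {p | IsShortest w' s v p ∧ ∃ u ∈ U, edgeOn p u v} =
      ⋃ u ∈ (U.filter fun u => dist w s u + w' u v = dist w' s v : Set V),
        (· ++ [v]) '' {q | IsShortest w s u q} := by
  ext p
  simp only [Set.mem_ofPred_eq, Set.mem_iUnion, Finset.coe_filter, Set.mem_image, exists_prop]
  constructor
  · rintro ⟨hp, u, hu, he⟩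
    obtain ⟨q, rfl, hq, hd⟩ := H.exists_isShortest_of_edgeOn hpos' hp hu he
    exact ⟨u, ⟨hu, hd⟩, q, hq, rfl⟩
  · rintro ⟨u, ⟨hu, hd⟩, q, hq, rfl⟩
    exact ⟨H.isShortest_concat hpos' hq hu hd, u, hu, edgeOn_concat hq.1.2.2.1 v⟩

open Classical in
lemma ncard_setOf_isShortest_edgeOn [Fintype V] (H : IsIncrementalUpdate w w' v U)
    (hpos' : ∀ a b, 0 < w' a b) (s : V) :
    {p | IsShortest w' s v p ∧ ∃ u ∈ U, edgeOn p u v}.ncard =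
      ∑ u ∈ U, if dist w s u + w' u v = dist w' s v then nsp w s u else 0 := by
  have hpos : ∀ a b, 0 < w a b := fun a b => (hpos' a b).trans_le (H.le a b)
  rw [H.setOf_isShortest_edgeOn_eq hpos' s, Set.Finite.ncard_biUnion (Finset.finite_toSet _),
    finsum_mem_coe_finset, Finset.sum_filter]
  · simp only [Set.ncard_image_of_injective _ (List.append_left_injective [v]), nsp]
  · exact fun u _ => (finite_setOf_isShortest hpos s u).image _
  · rintro u₁ - u₂ - hne
    refine Set.disjoint_left.2 ?_
    rintro _ ⟨q, hq, rfl⟩ ⟨q', hq', heq⟩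
    obtain rfl := List.append_left_injective [v] heq
    exact hne (Option.some_inj.1 (hq.1.2.2.1.symm.trans hq'.1.2.2.1))

lemma not_exists_edgeOn_of_isShortest (H : IsIncrementalUpdate w w' v U)
    (hpos : ∀ a b, 0 < w a b) (hp : IsShortest w s v p) (hd : dist w' s v = dist w s v) :
    ¬∃ u ∈ U, edgeOn p u v := by
  rintro ⟨u, hu, he⟩
  obtain ⟨q, rfl, hvq, hq⟩ := hp.1.exists_eq_concat_of_edgeOn (hp.nodup hpos) he
  have hqw := H.eq_of_edgeOn_of_notMem hvq
  have hlt := calc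
    dist w' s v ≤ pWeight w' (q ++ [v]) :=
      dist_le (((isPath_congr hqw).2 hq).concat (H.lt u hu).ne_top)
    _ = pWeight w q + w' u v := by rw [pWeight_concat hq.2.2.1, pWeight_congr hqw]
    _ < pWeight w q + w u v := ENNReal.add_lt_add_left (pWeight_ne_top hq.2.2.2) (H.lt u hu)
    _ = dist w s v := by rw [← pWeight_concat hq.2.2.1, hp.2]
  exact hlt.ne hd

lemma setOf_isShortest_not_exists_edgeOn_eq (H : IsIncrementalUpdate w w' v U)
    (hpos : ∀ a b, 0 < w a b) (hd : dist w' s v = dist w s v) :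
    {p | IsShortest w' s v p ∧ ¬∃ u ∈ U, edgeOn p u v} = {p | IsShortest w s v p} := by
  ext p
  refine ⟨fun ⟨hp, hno⟩ => ?_, fun hp => ?_⟩
  · have hpw := H.eq_of_edgeOn_of_not_exists hno
    exact ⟨(isPath_congr hpw).1 hp.1, by rw [← pWeight_congr hpw, hp.2, hd]⟩
  · have hno := H.not_exists_edgeOn_of_isShortest hpos hp hd
    have hpw := H.eq_of_edgeOn_of_not_exists hno
    exact ⟨⟨(isPath_congr hpw).2 hp.1, by rw [pWeight_congr hpw, hp.2, hd]⟩, hno⟩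

lemma exists_edgeOn_of_isShortest (H : IsIncrementalUpdate w w' v U)
    (hd : dist w' s v < dist w s v) (hp : IsShortest w' s v p) : ∃ u ∈ U, edgeOn p u v := by
  by_contra hno
  have hpw := H.eq_of_edgeOn_of_not_exists hno
  have hle := dist_le ((isPath_congr hpw).1 hp.1)
  rw [← pWeight_congr hpw, hp.2] at hle
  exact hd.not_ge hle

lemma nsp_eq_nsp_add_ncard [Fintype V] (H : IsIncrementalUpdate w w' v U)
    (hpos' : ∀ a b, 0 < w' a b) (hd : dist w' s v = dist w s v) :
    nsp w' s v = nsp w s v + {p | IsShortest w' s v p ∧ ∃ u ∈ U, edgeOn p u v}.ncard := by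
  have hpos : ∀ a b, 0 < w a b := fun a b => (hpos' a b).trans_le (H.le a b)
  rw [nsp, ← Set.ncard_inter_add_ncard_sdiff_eq_ncard _ {p | ∃ u ∈ U, edgeOn p u v}
    (finite_setOf_isShortest hpos' s v), add_comm, nsp,
    ← H.setOf_isShortest_not_exists_edgeOn_eq hpos hd]
  rfl

lemma nsp_eq_ncard_of_dist_lt (H : IsIncrementalUpdate w w' v U)
    (hd : dist w' s v < dist w s v) :
    nsp w' s v = {p | IsShortest w' s v p ∧ ∃ u ∈ U, edgeOn p u v}.ncard :=
  congrArg Set.ncard <| Set.ext fun _ =>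
    ⟨fun hp => ⟨hp, H.exists_edgeOn_of_isShortest hd hp⟩, And.left⟩

end IsIncrementalUpdate

open Classical in
theorem vertex_update_sigma_to_v_general [Fintype V]
(w w' : V → V → ℝ≥0∞) (v : V) (U : Finset V)
    (hpos' : ∀ a b, 0 < w' a b)
    (hdec : ∀ u ∈ U, w' u v < w u v)
    (hsame : ∀ a b : V, ¬(b = v ∧ a ∈ U) → w' a b = w a b)
    (s : V) :
    (dist w' s v = dist w s v →
      (Set.ncard {p | IsShortest w' s v p ∧ ∃ u ∈ U, edgeOn p u v} =
        ∑ u ∈ U, if dist w s u + w' u v = dist w s v then nsp w s u else 0) ∧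
      nsp w' s v = nsp w s v +
        Set.ncard {p | IsShortest w' s v p ∧ ∃ u ∈ U, edgeOn p u v}) ∧
    (dist w' s v < dist w s v →
      nsp w' s v =
        ∑ u ∈ U, if dist w s u + w' u v = dist w' s v then nsp w s u else 0) := by
  have H : IsIncrementalUpdate w w' v U := ⟨hdec, hsame⟩
  have hcount := H.ncard_setOf_isShortest_edgeOn hpos' s
  refine ⟨fun hd => ⟨hd ▸ hcount, H.nsp_eq_nsp_add_ncard hpos' hd⟩, fun hd => ?_⟩
  rw [H.nsp_eq_ncard_of_dist_lt hd, hcount]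

open Classical in
theorem vertex_update_sigma_to_v [Fintype V]
(w w' : V → V → ℝ≥0∞) (v : V) (U : Finset V)
    (hpos : ∀ a b, 0 < w a b) (hpos' : ∀ a b, 0 < w' a b)
    (hdec : ∀ u ∈ U, w' u v < w u v)
    (hsame : ∀ a b : V, ¬(b = v ∧ a ∈ U) → w' a b = w a b)
    (s : V) :
    (dist w' s v = dist w s v →
      (Set.ncard {p | IsShortest w' s v p ∧ ∃ u ∈ U, edgeOn p u v} =
        ∑ u ∈ U, if dist w s u + w' u v = dist w s v then nsp w s u else 0) ∧
      nsp w' s v = nsp w s v +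
        Set.ncard {p | IsShortest w' s v p ∧ ∃ u ∈ U, edgeOn p u v}) ∧
    (dist w' s v < dist w s v →
      nsp w' s v =
        ∑ u ∈ U, if dist w s u + w' u v = dist w' s v then nsp w s u else 0) :=
  vertex_update_sigma_to_v_general w w' v U hpos' hdec hsame s

end BC
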